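/- In the zero-divisor graph G(S) of S = P({1,2,3}) × Z/4Z, the vertex (∅,2) is orthogonal to both ({1,2,3},0) and ({1,2,3},2), yet N(({1,2,3},0)) ≠ N(({1,2,3},2)). Hence G(S) is not uniquely complemented. -/

import Mathlib

/-- The semigroup carrier: power set of a 3-element set times `ZMod 4`. -/
abbrev S : Type := Finset (Fin 3) × ZMod 4

/-- The componentwise operation `(X,a)*(Y,b) = (X ∩ Y, a*b)`. -/
def mulS (s t : S) : S := (s.1 ∩ t.1, s.2 * t.2)

/-- The zero element `(∅, 0)`. -/
def zeroS : S := (∅, 0)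

/-- `s` is a nonzero zero-divisor of `S`. -/
def IsVertex (s : S) : Prop := s ≠ zeroS ∧ ∃ t : S, t ≠ zeroS ∧ mulS s t = zeroS

/-- The zero-divisor graph `G(S)`. -/
def G : SimpleGraph S where
  Adj s t := s ≠ t ∧ IsVertex s ∧ IsVertex t ∧ mulS s t = zeroS
  symm := ⟨by
    rintro s t ⟨h1, h2, h3, h4⟩
    refine ⟨h1.symm, h3, h2, ?_⟩
    simpa [mulS, Finset.inter_comm, mul_comm] using h4⟩
  loopless := ⟨by rintro s ⟨h, _⟩; exact h rfl⟩

/-- `u ⟂ v`: adjacent with no common neighbor. -/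
def Orth (u v : S) : Prop := G.Adj u v ∧ ∀ w : S, ¬ (G.Adj w u ∧ G.Adj w v)

/-! The vertex `(∅, 2)` annihilates exactly the elements with even second coordinate, and any
common neighbour `w` of `(∅, 2)` and `(univ, c)` with `c ∈ {0, 2}` would have to be `(∅, 0)` or
`(∅, 2)` itself, so both orthogonality claims hold. The neighbourhoods of `(univ, 0)` and
`(univ, 2)` are told apart by `(∅, 1)`: it kills `(univ, 0)` but `2 * 1 ≠ 0` in `ZMod 4`. -/

instance : DecidablePred IsVertex := fun s =>
  inferInstanceAs (Decidable (s ≠ zeroS ∧ ∃ t : S, t ≠ zeroS ∧ mulS s t = zeroS))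

instance : DecidableRel G.Adj := fun s t =>
  inferInstanceAs (Decidable (s ≠ t ∧ IsVertex s ∧ IsVertex t ∧ mulS s t = zeroS))

instance (u v : S) : Decidable (Orth u v) :=
  inferInstanceAs (Decidable (G.Adj u v ∧ ∀ w : S, ¬ (G.Adj w u ∧ G.Adj w v)))

theorem orth_empty_two_univ_zero : Orth (∅, 2) (Finset.univ, 0) := by decide

theorem orth_empty_two_univ_two : Orth (∅, 2) (Finset.univ, 2) := by decide

theorem empty_one_mem_neighborSet_univ_zero :
    ((∅, 1) : S) ∈ G.neighborSet (Finset.univ, 0) := by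
  change G.Adj _ _
  decide

theorem empty_one_not_mem_neighborSet_univ_two :
    ((∅, 1) : S) ∉ G.neighborSet (Finset.univ, 2) := by
  change ¬ G.Adj _ _
  decide

theorem neighborSet_univ_zero_ne_univ_two :
    G.neighborSet (Finset.univ, 0) ≠ G.neighborSet (Finset.univ, 2) := fun h =>
  empty_one_not_mem_neighborSet_univ_two (h ▸ empty_one_mem_neighborSet_univ_zero)

theorem stmt11 :
    Orth (∅, 2) (Finset.univ, 0) ∧ Orth (∅, 2) (Finset.univ, 2) ∧
    G.neighborSet (Finset.univ, 0) ≠ G.neighborSet (Finset.univ, 2) ∧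
    ¬ (∀ a b c : S, a ≠ b → a ≠ c → b ≠ c → Orth a b → Orth a c →
        G.neighborSet b = G.neighborSet c) := by
  refine ⟨orth_empty_two_univ_zero, orth_empty_two_univ_two, neighborSet_univ_zero_ne_univ_two,
    fun huc => ?_⟩
  exact neighborSet_univ_zero_ne_univ_two <|
    huc _ _ _ (by decide) (by decide) (by decide) orth_empty_two_univ_zero orth_empty_two_univ_two
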